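/- The only critical points of the spherical pendulum Hamiltonian H restricted to T*S² are the two equilibria (q, p) = ((0,0,−1), 0) and (q, p) = ((0,0,1), 0). Precisely: a point (q, p) with ‖q‖ = 1 and ⟨q, p⟩ = 0 satisfies v₃ + ⟨p, w⟩ = 0 for every (v, w) ∈ ℝ³ × ℝ³ tangent to T*S² at (q, p) (that is, every (v, w) with ⟨q, v⟩ = 0 and ⟨p, v⟩ + ⟨q, w⟩ = 0) if and only if p = 0 and q = (0,0,1) or q = (0,0,−1). At these points H takes the values 1 and −1, respectively. -/

import Mathlib

/-!
The differential of `H` at `(q, p)` is `(v, w) ↦ ⟪e, v⟫ + ⟪p, w⟫` with `e` the vertical unit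
vector. Since `⟪q, p⟫ = 0`, the vector `(0, p)` is tangent to `T*S²`, and the differential sends it
to `‖p‖²`; so `p = 0`. Then every `v ⟂ q` must satisfy `v ⟂ e`, which forces `e = ±q`:
testing on `v = e - ⟪q, e⟫ q` gives `⟪q, e⟫² = 1`, the equality case of Cauchy–Schwarz.
-/

noncomputable section

/-- The spherical pendulum Hamiltonian H(q, p) = (1/2)‖p‖² + q₃. -/
def Hsp (q p : EuclideanSpace ℝ (Fin 3)) : ℝ := (1 / 2) * ‖p‖ ^ 2 + q 2

/-- The north and south poles (0,0,1) and (0,0,-1). -/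
def north : EuclideanSpace ℝ (Fin 3) := EuclideanSpace.single 2 (1 : ℝ)

open RealInnerProductSpace

section CriticalPoints

variable {E : Type*} [NormedAddCommGroup E] [InnerProductSpace ℝ E]

theorem eq_zero_of_forall_tangent_inner_eq_zero {q p e : E} (hqp : ⟪q, p⟫ = 0)
    (h : ∀ v w : E, ⟪q, v⟫ = 0 → ⟪p, v⟫ + ⟪q, w⟫ = 0 → ⟪e, v⟫ + ⟪p, w⟫ = 0) :
    p = 0 := by
  have hpp : ⟪p, p⟫ = 0 := by simpa using h 0 p (inner_zero_right q) (by simp [hqp])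
  exact inner_self_eq_zero.mp hpp

theorem eq_or_eq_neg_of_forall_inner_eq_zero {q e : E} (hq : ‖q‖ = 1) (he : ‖e‖ = 1)
    (h : ∀ v : E, ⟪q, v⟫ = 0 → ⟪e, v⟫ = 0) :
    q = e ∨ q = -e := by
  have hqq : ⟪q, q⟫ = 1 := by rw [real_inner_self_eq_norm_sq, hq, one_pow]
  have hee : ⟪e, e⟫ = 1 := by rw [real_inner_self_eq_norm_sq, he, one_pow]
  have hperp : ⟪q, e - ⟪q, e⟫ • q⟫ = 0 := by
    rw [inner_sub_right, real_inner_smul_right, hqq, mul_one, sub_self]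
  have hsq : ⟪q, e⟫ * ⟪q, e⟫ = 1 := by
    have := h _ hperp
    rw [inner_sub_right, real_inner_smul_right, hee, real_inner_comm q e] at this
    linarith
  rcases mul_self_eq_one_iff.mp hsq with h1 | h1
  · exact Or.inl ((inner_eq_one_iff_of_norm_eq_one hq he).mp h1)
  · exact Or.inr ((inner_eq_neg_one_iff_of_norm_eq_one hq he).mp h1)

theorem forall_tangent_inner_eq_zero_iff {q p e : E} (hq : ‖q‖ = 1) (he : ‖e‖ = 1)
    (hqp : ⟪q, p⟫ = 0) :
    (∀ v w : E, ⟪q, v⟫ = 0 → ⟪p, v⟫ + ⟪q, w⟫ = 0 → ⟪e, v⟫ + ⟪p, w⟫ = 0) ↔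
      p = 0 ∧ (q = e ∨ q = -e) := by
  constructor
  · intro h
    obtain rfl := eq_zero_of_forall_tangent_inner_eq_zero hqp h
    refine ⟨rfl, eq_or_eq_neg_of_forall_inner_eq_zero hq he fun v hv => ?_⟩
    simpa using h v 0 hv (by simp)
  · rintro ⟨rfl, rfl | rfl⟩ v w hv _
    · simpa using hv
    · simpa using hv

end CriticalPoints

theorem inner_north (v : EuclideanSpace ℝ (Fin 3)) : ⟪north, v⟫ = v 2 := by
  simp [north, EuclideanSpace.inner_single_left]

theorem norm_north : ‖north‖ = 1 := by
  simp [north]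

theorem north_two : north 2 = 1 := by
  simp [north]

/-- The only critical points of H restricted to T*S² are the equilibria
((0,0,-1), 0) and ((0,0,1), 0): for (q, p) with ‖q‖ = 1 and ⟨q, p⟩ = 0,
the differential of H vanishes on all tangent vectors to T*S² at (q, p)
iff p = 0 and q = ±(0,0,1).  At these points H equals 1 resp. -1. -/
theorem spherical_pendulum_critical_points :
    (∀ q p : EuclideanSpace ℝ (Fin 3), ‖q‖ = 1 → (inner ℝ q p : ℝ) = 0 →
      ((∀ v w : EuclideanSpace ℝ (Fin 3),
          (inner ℝ q v : ℝ) = 0 → (inner ℝ p v : ℝ) + (inner ℝ q w : ℝ) = 0 →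
          v 2 + (inner ℝ p w : ℝ) = 0)
        ↔ (p = 0 ∧ (q = north ∨ q = -north)))) ∧
    Hsp north 0 = 1 ∧ Hsp (-north) 0 = -1 := by
  refine ⟨fun q p hq hqp => ?_, by simp [Hsp, north_two], by simp [Hsp, north_two]⟩
  simp only [← inner_north]
  exact forall_tangent_inner_eq_zero_iff hq norm_north hqp
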